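/- Two LPMLN programs P and Q are semi-strongly equivalent (i.e., for every LPMLN program R, the programs P ∪ R and Q ∪ R have the same stable models) if and only if P and Q have the same SE-models. -/

import Mathlib

open scoped Classical

noncomputable section

namespace LPMLN

/-- A ground literal: an atom (numbered by `ℕ`) or its classical negation. -/
inductive Lit where
  | pos : ℕ → Lit
  | neg : ℕ → Lit
deriving DecidableEq

/-- The complementary literal. -/
def Lit.compl : Lit → Lit
  | .pos a => .neg a
  | .neg a => .pos a

/-- A finite set of literals is consistent if it contains no complementary pair. -/
def Consistent (I : Finset Lit) : Prop := ∀ l ∈ I, l.compl ∉ I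

/-- An ASP rule, given by its head, positive body and negative body. -/
structure Rule where
  head : Finset Lit
  pos : Finset Lit
  neg : Finset Lit
deriving DecidableEq

/-- The literals occurring in a rule. -/
def Rule.lits (r : Rule) : Finset Lit := r.head ∪ r.pos ∪ r.neg

/-- Satisfaction of a rule by a set of literals. -/
def Sat (I : Finset Lit) (r : Rule) : Prop :=
  r.pos ⊆ I → r.neg ∩ I = ∅ → (r.head ∩ I).Nonempty

/-- Satisfaction of an ASP program. -/
def SatProg (I : Finset Lit) (prog : Finset Rule) : Prop := ∀ r ∈ prog, Sat I r

/-- The GL-reduct of an ASP program w.r.t. an interpretation. -/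
def glReduct (prog : Finset Rule) (I : Finset Lit) : Finset Rule :=
  (prog.filter fun r => r.neg ∩ I = ∅).image fun r => ⟨r.head, r.pos, ∅⟩

/-- `I` is a stable model of the ASP program `prog`: `I` is a consistent set of
literals satisfying the GL-reduct, no proper subset of which satisfies the GL-reduct. -/
def AspStable (prog : Finset Rule) (I : Finset Lit) : Prop :=
  Consistent I ∧ SatProg I (glReduct prog I) ∧ ∀ J ⊂ I, ¬ SatProg J (glReduct prog I)

/-- A weight: a real number (soft rule) or the symbol `α` (hard rule). -/
inductive Weight where
  | soft : ℝ → Weight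
  | hard : Weight

/-- The real value of a soft weight (hard weights get the dummy value 0). -/
def Weight.val : Weight → ℝ
  | .soft w => w
  | .hard => 0

/-- A weighted rule `w : r`. -/
structure WRule where
  w : Weight
  r : Rule

/-- An LPMLN program: a finite set of weighted rules. -/
abbrev Program := Finset WRule

/-- The LPMLN reduct `P_I`: the rules of `P` satisfied by `I`. -/
def reduct (P : Program) (I : Finset Lit) : Program := P.filter fun wr => Sat I wr.r

/-- The unweighted ASP counterpart of an LPMLN program. -/
def unweighted (P : Program) : Finset Rule := P.image fun wr => wr.r

/-- `I` is a stable model of the LPMLN program `P`: `I` is a stable model of the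
unweighted ASP counterpart of the LPMLN reduct `P_I`. -/
def Stable (P : Program) (I : Finset Lit) : Prop :=
  AspStable (unweighted (reduct P I)) I

/-- The literals occurring in an LPMLN program. -/
def litset (P : Program) : Finset Lit := P.biUnion fun wr => wr.r.lits

/-- `(X, Y)` is an SE-interpretation: a pair of interpretations with `X ⊆ Y`. -/
def SEInterp (X Y : Finset Lit) : Prop := Consistent X ∧ Consistent Y ∧ X ⊆ Y

/-- `(X, Y)` is an SE-model of the LPMLN program `P`: an SE-interpretation such that
`X` satisfies the GL-reduct (w.r.t. `Y`) of the unweighted version of `P_Y`. -/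
def SEModel (P : Program) (X Y : Finset Lit) : Prop :=
  SEInterp X Y ∧ SatProg X (glReduct (unweighted (reduct P Y)) Y)

/-- The number of hard rules of `P` satisfied by `I`. -/
def hardCount (P : Program) (I : Finset Lit) : ℕ :=
  ((reduct P I).filter fun wr => wr.w = Weight.hard).card

/-- The sum of the weights of the soft rules of `P` satisfied by `I`. -/
def softWeight (P : Program) (I : Finset Lit) : ℝ :=
  ∑ wr ∈ ((reduct P I).filter fun wr => wr.w ≠ Weight.hard), wr.w.val

/-- The weight degree `W(P, I) = exp(Σ_{w:r ∈ P_I} w)`, viewed as the real-valued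
function `A ↦ exp(c' + k'·A)` of the value `A` given to the symbol `α`, where `k'` is
the number of hard rules of `P` satisfied by `I` and `c'` the sum of the weights of the
soft rules of `P` satisfied by `I`. -/
def wdeg (P : Program) (I : Finset Lit) (A : ℝ) : ℝ :=
  Real.exp (softWeight P I + A * hardCount P I)

/-- The (finite) set of stable models of `P` (every stable model of `P` is a subset of
`litset P`). -/
def SMset (P : Program) : Finset (Finset Lit) :=
  (litset P).powerset.filter fun I => Stable P I

/-- The probability degree `Pr(P, I)`: the limit, as `α → ∞`, of
`W(P, I) / Σ_{I' ∈ SM(P)} W(P, I')` if `I` is a stable model of `P`, and `0` otherwise. -/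
def PrDeg (P : Program) (I : Finset Lit) : ℝ :=
  if Stable P I then
    Filter.limUnder Filter.atTop fun A => wdeg P I A / ∑ I' ∈ SMset P, wdeg P I' A
  else 0

/-- `I` is a probabilistic stable model of `P`: a stable model of `P` satisfying the
maximum number of hard rules of `P` (equivalently, with nonzero probability degree). -/
def PStable (P : Program) (I : Finset Lit) : Prop :=
  Stable P I ∧ ∀ J, Stable P J → hardCount P J ≤ hardCount P I

/-- Semi-strong equivalence: the extensions by any LPMLN program have the same
stable models. -/
def SemiStrongEq (P Q : Program) : Prop :=
  ∀ R : Program, ∀ I, Stable (P ∪ R) I ↔ Stable (Q ∪ R) I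

/-- p-ordinary equivalence: same stable models and same probability degrees. -/
def POrdEq (P Q : Program) : Prop :=
  (∀ I, Stable P I ↔ Stable Q I) ∧ ∀ I, Stable P I → PrDeg P I = PrDeg Q I

/-- p-strong equivalence: p-ordinary equivalence under every extension. -/
def PStrongEq (P Q : Program) : Prop := ∀ R : Program, POrdEq (P ∪ R) (Q ∪ R)

/-- Comparison of the symbolic weight degrees of two interpretations w.r.t. `P`:
`exp(c + k·α) ≤ exp(c' + k'·α)` iff `k < k'`, or `k = k'` and `c ≤ c'`. -/
def WLe (P : Program) (I J : Finset Lit) : Prop :=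
  hardCount P I < hardCount P J ∨
    (hardCount P I = hardCount P J ∧ softWeight P I ≤ softWeight P J)

/-- q-strong equivalence: same stable models under every extension, with
order-preserving weight degrees. -/
def QStrongEq (P Q : Program) : Prop :=
  ∀ R : Program,
    (∀ I, Stable (P ∪ R) I ↔ Stable (Q ∪ R) I) ∧
    ∀ X Y, Stable (P ∪ R) X → Stable (P ∪ R) Y → (WLe (P ∪ R) X Y ↔ WLe (Q ∪ R) X Y)

/-- A soft stable model of `P`: a stable model of `P` satisfying all hard rules of `P`. -/
def SoftStable (P : Program) (I : Finset Lit) : Prop :=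
  Stable P I ∧ ∀ wr ∈ P, wr.w = Weight.hard → Sat I wr.r

/-- A soft SE-model of `P`: an SE-model `(X, Y)` of `P` such that `Y` satisfies all
hard rules of `P`. -/
def SoftSEModel (P : Program) (X Y : Finset Lit) : Prop :=
  SEModel P X Y ∧ ∀ wr ∈ P, wr.w = Weight.hard → Sat Y wr.r

/-- The (finite) set of soft stable models of `P`. -/
def SSMset (P : Program) : Finset (Finset Lit) :=
  (litset P).powerset.filter fun I => SoftStable P I

/-- The probability degree under the soft stable model semantics:
`Pr_s(P, X) = W_s(P, X) / Σ_{X' ∈ SSM(P)} W_s(P, X')`, where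
`W_s(P, X) = exp(Σ_{w:r ∈ P^s, X ⊨ r} w)`. -/
def PrS (P : Program) (X : Finset Lit) : ℝ :=
  Real.exp (softWeight P X) / ∑ X' ∈ SSMset P, Real.exp (softWeight P X')

/-- sp-strong equivalence: p-strong equivalence under the soft stable model
semantics. -/
def SPStrongEq (P Q : Program) : Prop :=
  ∀ R : Program,
    (∀ I, SoftStable (P ∪ R) I ↔ SoftStable (Q ∪ R) I) ∧
    ∀ X, SoftStable (P ∪ R) X → PrS (P ∪ R) X = PrS (Q ∪ R) X

/-- `(X, Y)` is a UE-model of `P`: an SE-model with `X = Y`, or with `X ⊊ Y` such that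
no `X'` strictly between `X` and `Y` gives an SE-model `(X', Y)`. -/
def UEModel (P : Program) (X Y : Finset Lit) : Prop :=
  SEModel P X Y ∧
    (X = Y ∨ (X ⊂ Y ∧ ∀ X', X ⊂ X' → X' ⊂ Y → ¬ SEModel P X' Y))

/-- A program consisting of weighted facts only (rules with empty bodies). -/
def IsFactProg (R : Program) : Prop := ∀ wr ∈ R, wr.r.pos = ∅ ∧ wr.r.neg = ∅

/-- p-uniform equivalence: p-ordinary equivalence under every extension by a set of
weighted facts. -/
def PUniformEq (P Q : Program) : Prop :=
  ∀ R : Program, IsFactProg R → POrdEq (P ∪ R) (Q ∪ R)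

/-- The flattening rules `R(X, Y, a)`: the two hard rules
`α : ← X, not Y, a` and `α : a ← X, not Y`. -/
def flatten (X Y : Finset Lit) (a : ℕ) : Program :=
  {⟨Weight.hard, ⟨∅, X ∪ {Lit.pos a}, Y⟩⟩, ⟨Weight.hard, ⟨{Lit.pos a}, X, Y⟩⟩}

/-- The hard fact `α : l`. -/
def factOf (l : Lit) : WRule := ⟨Weight.hard, ⟨{l}, ∅, ∅⟩⟩

/-- The base flattening extension `E⁰(P, U) = P ∪ {α : a | a ∈ U}`. -/
def E0 (P : Program) (U : Finset Lit) : Program := P ∪ U.image factOf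

/-- `IsFlatExt P U k E` holds iff `E` is a flattening extension `E^k(P, U)`:
`E⁰(P, U) = P ∪ {α : a | a ∈ U}` and `E^{i+1}(P, U) = E^i(P, U) ∪ R(X ∩ U, U − X, c)`
where `X` is a probabilistic stable model of `E^i(P, U)` and `c` is a fresh atom. -/
inductive IsFlatExt (P : Program) (U : Finset Lit) : ℕ → Program → Prop
  | zero : IsFlatExt P U 0 (E0 P U)
  | succ {i : ℕ} {E : Program} {X : Finset Lit} {c : ℕ} :
      IsFlatExt P U i E → PStable E X →
      Lit.pos c ∉ litset E → Lit.neg c ∉ litset E →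
      IsFlatExt P U (i + 1) (E ∪ flatten (X ∩ U) (U \ X) c)

/-!
For a consistent `I`, the GL-reduct of `(P ∪ R)_I` splits into those of `P_I` and `R_I`, and
a proper subset `J ⊂ I` satisfies the `P`-part exactly when `(J, I)` is an SE-model of `P`.
So `I` is a stable model of `P ∪ R` iff no SE-model `(J, I)` of `P` with `J ⊊ I` satisfies
the reduct of `R`, which depends on `P` only through its SE-models. Conversely, if `(X, Y)`
is an SE-model of `P` but not of `Q`, then `X ⊊ Y`, and the facts `X` together with the rules
`y ← y'` for `y, y' ∈ Y \ X` make up a program `R` whose reduct w.r.t. `Y` is satisfied by no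
`J ⊊ Y` other than `X`; hence `Y` is a stable model of `Q ∪ R` but not of `P ∪ R`.
-/

lemma Consistent.mono {J I : Finset Lit} (h : J ⊆ I) (hI : Consistent I) : Consistent J :=
  fun l hl hc => hI l (h hl) (h hc)

lemma satProg_union {J : Finset Lit} {A B : Finset Rule} :
    SatProg J (A ∪ B) ↔ SatProg J A ∧ SatProg J B :=
  Finset.forall_mem_union

lemma glReduct_reduct_union (P R : Program) (I : Finset Lit) :
    glReduct (unweighted (reduct (P ∪ R) I)) I =
      glReduct (unweighted (reduct P I)) I ∪ glReduct (unweighted (reduct R I)) I := by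
  simp only [glReduct, unweighted, reduct, Finset.filter_union, Finset.image_union]

lemma satProg_glReduct_reduct_iff {P : Program} {I J : Finset Lit} :
    SatProg J (glReduct (unweighted (reduct P I)) I) ↔
      ∀ wr ∈ P, Sat I wr.r → wr.r.neg ∩ I = ∅ → wr.r.pos ⊆ J → (wr.r.head ∩ J).Nonempty := by
  simp only [SatProg, glReduct, unweighted, reduct, Finset.mem_filter, Finset.mem_image, and_imp,
    forall_exists_index]
  constructor
  · intro h wr hwr hsat hneg hpos
    exact h ⟨wr.r.head, wr.r.pos, ∅⟩ _ wr hwr hsat rfl hneg rfl hpos (Finset.empty_inter J)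
  · rintro h _ _ wr hwr hsat rfl hneg rfl hpos -
    exact h wr hwr hsat hneg hpos

lemma satProg_glReduct_reduct_self (P : Program) (I : Finset Lit) :
    SatProg I (glReduct (unweighted (reduct P I)) I) :=
  satProg_glReduct_reduct_iff.2 fun _ _ hsat hneg hpos => hsat hpos hneg

lemma seModel_self (P : Program) {Y : Finset Lit} (hY : Consistent Y) : SEModel P Y Y :=
  ⟨⟨hY, hY, subset_rfl⟩, satProg_glReduct_reduct_self P Y⟩

lemma stable_union_iff (P R : Program) (I : Finset Lit) :
    Stable (P ∪ R) I ↔ Consistent I ∧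
      ∀ J ⊂ I, SEModel P J I → ¬ SatProg J (glReduct (unweighted (reduct R I)) I) := by
  simp only [Stable, AspStable, satProg_glReduct_reduct_self, true_and,
    glReduct_reduct_union, satProg_union, not_and]
  refine and_congr_right fun hI => forall₂_congr fun J hJ => ?_
  exact ⟨fun h hP => h hP.2, fun h hP => h ⟨⟨hI.mono hJ.1, hI, hJ.1⟩, hP⟩⟩

def separator (X Y : Finset Lit) : Program :=
  X.image factOf ∪ ((Y \ X) ×ˢ (Y \ X)).image fun p => ⟨Weight.hard, ⟨{p.1}, {p.2}, ∅⟩⟩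

lemma satProg_glReduct_separator_iff {X Y J : Finset Lit} (hXY : X ⊆ Y) :
    SatProg J (glReduct (unweighted (reduct (separator X Y) Y)) Y) ↔
      X ⊆ J ∧ ∀ y ∈ Y \ X, ∀ y' ∈ Y \ X, y' ∈ J → y ∈ J := by
  rw [satProg_glReduct_reduct_iff]
  simp only [separator, Finset.forall_mem_union, Finset.forall_mem_image, factOf, Prod.forall,
    Finset.mem_product, and_imp, Sat, ← Finset.coe_nonempty, Finset.coe_inter, Finset.coe_singleton,
    Set.singleton_inter_nonempty, Finset.mem_coe, Finset.empty_inter, Finset.empty_subset,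
    Finset.singleton_subset_iff, forall_const]
  constructor
  · rintro ⟨hfacts, hpairs⟩
    exact ⟨fun x hx => hfacts hx (hXY hx),
      fun y hy y' hy' => hpairs y y' hy hy' fun _ => (Finset.mem_sdiff.1 hy).1⟩
  · rintro ⟨hXJ, hclosed⟩
    exact ⟨fun x hx _ => hXJ hx, fun y y' hy hy' _ => hclosed y hy y' hy'⟩

lemma satProg_glReduct_separator_iff_eq {X Y J : Finset Lit} (hXY : X ⊆ Y) (hJY : J ⊂ Y) :
    SatProg J (glReduct (unweighted (reduct (separator X Y) Y)) Y) ↔ J = X := by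
  rw [satProg_glReduct_separator_iff hXY]
  constructor
  · rintro ⟨hXJ, hclosed⟩
    refine Finset.Subset.antisymm (fun j hj => ?_) hXJ
    by_contra hjX
    have hj' : j ∈ Y \ X := Finset.mem_sdiff.2 ⟨hJY.1 hj, hjX⟩
    refine hJY.2 fun y hy => ?_
    by_cases hyX : y ∈ X
    · exact hXJ hyX
    · exact hclosed y (Finset.mem_sdiff.2 ⟨hy, hyX⟩) j hj' hj
  · rintro rfl
    exact ⟨subset_rfl, fun _ _ y' hy' hy'X => absurd hy'X (Finset.mem_sdiff.1 hy').2⟩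

lemma SemiStrongEq.seModel {P Q : Program} (h : SemiStrongEq P Q) {X Y : Finset Lit}
    (hP : SEModel P X Y) : SEModel Q X Y := by
  obtain ⟨⟨-, hY, hXY⟩, hPX⟩ := hP
  by_contra hQ
  have hXY' : X ⊂ Y :=
    hXY.ssubset_of_ne fun hXeqY => hQ (by rw [hXeqY]; exact seModel_self Q hY)
  have hQR : Stable (Q ∪ separator X Y) Y := by
    refine (stable_union_iff _ _ _).2 ⟨hY, fun J hJ hQJ hJsep => ?_⟩
    obtain rfl := (satProg_glReduct_separator_iff_eq hXY hJ).1 hJsep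
    exact hQ hQJ
  have hPR := (stable_union_iff _ _ _).1 ((h _ Y).2 hQR)
  exact hPR.2 X hXY' ⟨⟨hY.mono hXY, hY, hXY⟩, hPX⟩
    ((satProg_glReduct_separator_iff_eq hXY hXY').2 rfl)

/-- Two LPMLN programs `P` and `Q` are semi-strongly equivalent (i.e., for
every LPMLN program `R`, the programs `P ∪ R` and `Q ∪ R` have the same stable models)
if and only if `P` and `Q` have the same SE-models. -/
theorem semiStrongEq_iff_same_SEModels (P Q : Program) :
    SemiStrongEq P Q ↔ ∀ X Y, SEModel P X Y ↔ SEModel Q X Y := by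
  constructor
  · intro h X Y
    exact ⟨h.seModel, SemiStrongEq.seModel fun R I => (h R I).symm⟩
  · intro hSE R I
    simp only [stable_union_iff, hSE]

end LPMLN
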